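/- arXiv:0810.4006 — 11 statements merged into one kernel-verified Lean document; each statement's English description precedes it below -/
import Mathlib

section
/- Let I ⊆ ℝ be an open interval, let b0, b1, b2 : I → ℝ be differentiable with b0(t)·b2(t) ≠ 0 for all t ∈ I, and let c0, c1, c2 be real constants with c0·c2 ≠ 0 and b2(t)·c0/(b0(t)·c2) > 0 for all t ∈ I. Define G(t) = √(b2(t)·c0/(b0(t)·c2)) and D(t) = b2(t)/(c2·G(t)). If b1(t) + (1/2)·(b2'(t)/b2(t) − b0'(t)/b0(t)) = c1·D(t) for all t ∈ I, then for every differentiable solution y : I → ℝ of the Riccati equation y' = b0(t) + b1(t)·y + b2(t)·y², the function z(t) = G(t)·y(t) satisfies z'(t) = D(t)·(c0 + c1·z(t) + c2·z(t)²) for all t ∈ I. Moreover D(t)²·c0·c2 = b0(t)·b2(t) for all t ∈ I. -/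
/-!
Writing `z = G y`, the product rule gives `z' = G' y + G (b0 + b1 y + b2 y²)`, and matching this
with `D (c0 + c1 z + c2 z²)` coefficient by coefficient asks for `G b0 = D c0`, `b2 = D c2 G` and
`G'/G + b1 = c1 D`. The first two are algebraic consequences of `G² = b2 c0 / (b0 c2)` and
`D = b2 / (c2 G)`, and multiplying them gives `D² c0 c2 = b0 b2`; the third is the hypothesis on `b1`, because the logarithmic derivative of
`G = √(b2 c0 / (b0 c2))` is `(b2'/b2 - b0'/b0) / 2`.
-/

open Real

theorem HasDerivAt.riccati_dilation {y G : ℝ → ℝ} {t b0 b1 b2 g c0 c1 c2 D : ℝ}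
    (hy : HasDerivAt y (b0 + b1 * y t + b2 * y t ^ 2) t) (hG : HasDerivAt G g t)
    (h0 : G t * b0 = D * c0) (h1 : g + G t * b1 = D * c1 * G t) (h2 : b2 = D * c2 * G t) :
    HasDerivAt (fun s => G s * y s) (D * (c0 + c1 * (G t * y t) + c2 * (G t * y t) ^ 2)) t :=
  (hG.mul hy).congr_deriv (by linear_combination h0 + y t * h1 + G t * y t ^ 2 * h2)

theorem hasDerivAt_sqrt_div {u v : ℝ → ℝ} {u' v' t : ℝ} (hu : HasDerivAt u u' t)
    (hv : HasDerivAt v v' t) (hpos : 0 < u t / v t) :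
    HasDerivAt (fun s => √(u s / v s)) (√(u t / v t) * ((u' / u t - v' / v t) / 2)) t := by
  obtain ⟨hu0, hv0⟩ := div_ne_zero_iff.1 hpos.ne'
  have hsq : √(u t / v t) ^ 2 = u t / v t := sq_sqrt hpos.le
  refine ((hu.div hv hv0).sqrt hpos.ne').congr_deriv ?_
  rw [Pi.div_apply]
  field_simp
  rw [hsq]
  field_simp

section DilationCoefficients

variable {b0 b2 c0 c2 G D : ℝ}

theorem dilation_coeff_const (hG : G ^ 2 = b2 * c0 / (b0 * c2)) (hG0 : G ≠ 0)
    (hD : D = b2 / (c2 * G)) : G * b0 = D * c0 := by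
  obtain ⟨-, hb0c2⟩ := div_ne_zero_iff.1 (hG ▸ pow_ne_zero 2 hG0)
  have hb0 : b0 ≠ 0 := left_ne_zero_of_mul hb0c2
  have hc2 : c2 ≠ 0 := right_ne_zero_of_mul hb0c2
  rw [hD]
  field_simp at hG ⊢
  linear_combination hG

theorem dilation_coeff_quad (hG : G ^ 2 = b2 * c0 / (b0 * c2)) (hG0 : G ≠ 0)
    (hD : D = b2 / (c2 * G)) : b2 = D * c2 * G := by
  have hc2 : c2 ≠ 0 := right_ne_zero_of_mul (div_ne_zero_iff.1 (hG ▸ pow_ne_zero 2 hG0)).2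
  rw [hD]
  field_simp

end DilationCoefficients

theorem riccati_dilation_transform_general
    (I : Set ℝ)
    (b0 b1 b2 d0 d2 : ℝ → ℝ)
    (hb0 : ∀ t ∈ I, HasDerivAt b0 (d0 t) t)
    (hb2 : ∀ t ∈ I, HasDerivAt b2 (d2 t) t)
    (c0 c1 c2 : ℝ)
    (hpos : ∀ t ∈ I, b2 t * c0 / (b0 t * c2) > 0)
    (G D : ℝ → ℝ)
    (hG : ∀ t, G t = Real.sqrt (b2 t * c0 / (b0 t * c2)))
    (hD : ∀ t, D t = b2 t / (c2 * G t))
    (hcond : ∀ t ∈ I, b1 t + (1/2) * (d2 t / b2 t - d0 t / b0 t) = c1 * D t) :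
    (∀ y : ℝ → ℝ,
      (∀ t ∈ I, HasDerivAt y (b0 t + b1 t * y t + b2 t * (y t)^2) t) →
      ∀ t ∈ I, HasDerivAt (fun s => G s * y s)
        (D t * (c0 + c1 * (G t * y t) + c2 * (G t * y t)^2)) t) ∧
    (∀ t ∈ I, (D t)^2 * c0 * c2 = b0 t * b2 t) := by
  have hGsq : ∀ t ∈ I, G t ^ 2 = b2 t * c0 / (b0 t * c2) := fun t ht =>
    (hG t).symm ▸ sq_sqrt (hpos t ht).le
  have hG0 : ∀ t ∈ I, G t ≠ 0 := fun t ht => (hG t).symm ▸ (sqrt_pos.2 (hpos t ht)).ne'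
  have hconst : ∀ t ∈ I, G t * b0 t = D t * c0 := fun t ht =>
    dilation_coeff_const (hGsq t ht) (hG0 t ht) (hD t)
  have hquad : ∀ t ∈ I, b2 t = D t * c2 * G t := fun t ht =>
    dilation_coeff_quad (hGsq t ht) (hG0 t ht) (hD t)
  refine ⟨fun y hy t ht => ?_, fun t ht => ?_⟩
  · obtain ⟨hb2c0, hb0c2⟩ := div_ne_zero_iff.1 (hpos t ht).ne'
    have hlog : d2 t * c0 / (b2 t * c0) - d0 t * c2 / (b0 t * c2) = d2 t / b2 t - d0 t / b0 t := by
      rw [mul_div_mul_right _ _ (right_ne_zero_of_mul hb2c0),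
        mul_div_mul_right _ _ (right_ne_zero_of_mul hb0c2)]
    have hGderiv : HasDerivAt G (G t * ((d2 t / b2 t - d0 t / b0 t) / 2)) t := by
      rw [funext hG, ← hlog]
      exact hasDerivAt_sqrt_div ((hb2 t ht).mul_const c0) ((hb0 t ht).mul_const c2) (hpos t ht)
    exact (hy t ht).riccati_dilation hGderiv (hconst t ht)
      (by linear_combination G t * hcond t ht) (hquad t ht)
  · linear_combination (-(D t * c2)) * hconst t ht - b0 t * hquad t ht

/-- A time-dependent dilation `z = G(t)·y` with
`G(t) = √(b2·c0/(b0·c2))` maps solutions of the Riccati equation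
`y' = b0 + b1·y + b2·y²` to solutions of `z' = D(t)·(c0 + c1·z + c2·z²)`,
provided the integrability condition
`b1 + (1/2)(b2'/b2 − b0'/b0) = c1·D` holds; moreover `D²·c0·c2 = b0·b2`. -/
theorem riccati_dilation_transform
    (I : Set ℝ) (hIopen : IsOpen I) (hIint : Convex ℝ I)
    (b0 b1 b2 d0 d1 d2 : ℝ → ℝ)
    (hb0 : ∀ t ∈ I, HasDerivAt b0 (d0 t) t)
    (hb1 : ∀ t ∈ I, HasDerivAt b1 (d1 t) t)
    (hb2 : ∀ t ∈ I, HasDerivAt b2 (d2 t) t)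
    (hne : ∀ t ∈ I, b0 t * b2 t ≠ 0)
    (c0 c1 c2 : ℝ) (hc : c0 * c2 ≠ 0)
    (hpos : ∀ t ∈ I, b2 t * c0 / (b0 t * c2) > 0)
    (G D : ℝ → ℝ)
    (hG : ∀ t, G t = Real.sqrt (b2 t * c0 / (b0 t * c2)))
    (hD : ∀ t, D t = b2 t / (c2 * G t))
    (hcond : ∀ t ∈ I, b1 t + (1/2) * (d2 t / b2 t - d0 t / b0 t) = c1 * D t) :
    (∀ y : ℝ → ℝ,
      (∀ t ∈ I, HasDerivAt y (b0 t + b1 t * y t + b2 t * (y t)^2) t) →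
      ∀ t ∈ I, HasDerivAt (fun s => G s * y s)
        (D t * (c0 + c1 * (G t * y t) + c2 * (G t * y t)^2)) t) ∧
    (∀ t ∈ I, (D t)^2 * c0 * c2 = b0 t * b2 t) :=
  riccati_dilation_transform_general I b0 b1 b2 d0 d2 hb0 hb2 c0 c1 c2 hpos G D hG hD hcond
end

section
/- Let I ⊆ ℝ be an open interval, let b0, b1, b2 : I → ℝ be differentiable with b0(t)·b2(t) ≠ 0 for all t ∈ I, let c0, c1, c2 be real constants with c0·c2 ≠ 0, and let D : I → ℝ and G : I → ℝ with G differentiable and G(t) > 0 for all t. Suppose that for all t ∈ I and all y ∈ ℝ the transformation identity G'(t)·y + G(t)·(b0(t) + b1(t)·y + b2(t)·y²) = D(t)·(c0 + c1·G(t)·y + c2·G(t)²·y²) holds (i.e., y' = G(t)·y maps the Riccati equation with coefficients b0, b1, b2 into the equation dy'/dt = D(t)·(c0 + c1·y' + c2·y'²)). Then necessarily D(t)²·c0·c2 = b0(t)·b2(t), b1(t) + (1/2)·(b2'(t)/b2(t) − b0'(t)/b0(t)) = c1·D(t), and G(t) = √(b2(t)·c0/(b0(t)·c2)) for all t ∈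 I. -/
/-!
Comparing the coefficients of `1`, `y` and `y²` in the transformation identity gives
`G b0 = D c0`, `G' + G b1 = c1 D G` and `b2 = c2 D G`. Eliminating `D` from the first and
last yields the first condition and `G² b0 c2 = b2 c0` on `I`, which determines `G`.
Since `I` is open, this identity can be differentiated; its logarithmic derivative
`2 G'/G = b2'/b2 - b0'/b0`, combined with the middle coefficient, gives the second condition.
-/

open Filter Topology

theorem eq_of_forall_quadratic_eq {K : Type*} [Field K] [NeZero (2 : K)] {a₀ a₁ a₂ b₀ b₁ b₂ : K}
    (h : ∀ y, a₀ + a₁ * y + a₂ * y ^ 2 = b₀ + b₁ * y + b₂ * y ^ 2) :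
    a₀ = b₀ ∧ a₁ = b₁ ∧ a₂ = b₂ := by
  have h₀ := h 0
  have h₁ := h 1
  have hneg := h (-1)
  have two_ne : (2 : K) ≠ 0 := NeZero.ne 2
  refine ⟨by simpa using h₀, ?_, ?_⟩
  · exact mul_left_cancel₀ two_ne (by linear_combination h₁ - hneg)
  · exact mul_left_cancel₀ two_ne (by linear_combination h₁ + hneg - 2 * h₀)

theorem dilation_identity_coeffs {K : Type*} [Field K] [NeZero (2 : K)]
    {g g' β₀ β₁ β₂ δ c₀ c₁ c₂ : K} (hg : g ≠ 0)
    (h : ∀ y, g' * y + g * (β₀ + β₁ * y + β₂ * y ^ 2) = δ * (c₀ + c₁ * (g * y) + c₂ * g ^ 2 * y ^ 2)) :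
    g * β₀ = δ * c₀ ∧ g' + g * β₁ = δ * c₁ * g ∧ β₂ = δ * c₂ * g := by
  have h' : ∀ y, g * β₀ + (g' + g * β₁) * y + g * β₂ * y ^ 2
      = δ * c₀ + δ * c₁ * g * y + δ * c₂ * g ^ 2 * y ^ 2 := fun y => by linear_combination h y
  obtain ⟨h₀, h₁, h₂⟩ := eq_of_forall_quadratic_eq h'
  exact ⟨h₀, h₁, mul_left_cancel₀ hg (by linear_combination h₂)⟩

theorem two_mul_div_add_div_eq_div_of_sq_mul_eventuallyEq {g u v : ℝ → ℝ} {g' u' v' t : ℝ}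
    (hg : HasDerivAt g g' t) (hu : HasDerivAt u u' t) (hv : HasDerivAt v v' t)
    (hgt : g t ≠ 0) (hut : u t ≠ 0) (hguv : (fun s => g s ^ 2 * u s) =ᶠ[𝓝 t] v) :
    2 * (g' / g t) + u' / u t = v' / v t := by
  have hderiv : 2 * g t * g' * u t + g t ^ 2 * u' = v' := by
    have := ((hg.pow 2).mul hu).congr_of_eventuallyEq hguv.symm |>.unique hv
    simp only [Pi.pow_apply] at this
    linear_combination this
  rw [← hguv.eq_of_nhds, ← hderiv]
  field_simp

theorem riccati_dilation_necessary_conditions_general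
    (I : Set ℝ) (hIopen : IsOpen I)
    (b0 b1 b2 d0 d2 : ℝ → ℝ)
    (hb0 : ∀ t ∈ I, HasDerivAt b0 (d0 t) t)
    (hb2 : ∀ t ∈ I, HasDerivAt b2 (d2 t) t)
    (hne : ∀ t ∈ I, b0 t * b2 t ≠ 0)
    (c0 c1 c2 : ℝ) (hc : c0 * c2 ≠ 0)
    (D G G' : ℝ → ℝ)
    (hGd : ∀ t ∈ I, HasDerivAt G (G' t) t)
    (hGpos : ∀ t ∈ I, G t > 0)
    (hid : ∀ t ∈ I, ∀ y : ℝ,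
      G' t * y + G t * (b0 t + b1 t * y + b2 t * y^2)
        = D t * (c0 + c1 * (G t * y) + c2 * (G t)^2 * y^2)) :
    ∀ t ∈ I,
      (D t)^2 * c0 * c2 = b0 t * b2 t ∧
      b1 t + (1/2) * (d2 t / b2 t - d0 t / b0 t) = c1 * D t ∧
      G t = Real.sqrt (b2 t * c0 / (b0 t * c2)) := by
  have hcoeffs (t) (ht : t ∈ I) := dilation_identity_coeffs (hGpos t ht).ne' (hid t ht)
  have hsq : ∀ t ∈ I, G t ^ 2 * (b0 t * c2) = b2 t * c0 := fun t ht => by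
    obtain ⟨h₀, -, h₂⟩ := hcoeffs t ht
    linear_combination G t * c2 * h₀ - c0 * h₂
  intro t ht
  obtain ⟨h₀, h₁, h₂⟩ := hcoeffs t ht
  have hG := hGpos t ht
  obtain ⟨hb0t, hb2t⟩ := mul_ne_zero_iff.mp (hne t ht)
  obtain ⟨hc0, hc2⟩ := mul_ne_zero_iff.mp hc
  have hlog := two_mul_div_add_div_eq_div_of_sq_mul_eventuallyEq (hGd t ht)
    ((hb0 t ht).mul_const c2) ((hb2 t ht).mul_const c0) hG.ne' (mul_ne_zero hb0t hc2)
    (eventually_of_mem (hIopen.mem_nhds ht) hsq)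
  rw [mul_div_mul_right _ _ hc2, mul_div_mul_right _ _ hc0] at hlog
  refine ⟨by linear_combination -b0 t * h₂ - D t * c2 * h₀, ?_, ?_⟩
  · have hG' : G' t / G t = c1 * D t - b1 t := by
      field_simp
      linear_combination h₁
    linear_combination hG' - hlog / 2
  · rw [← eq_div_iff (mul_ne_zero hb0t hc2) |>.mpr (hsq t ht), Real.sqrt_sq hG.le]

/-- If the dilation `y' = G(t)·y` (with `G > 0` differentiable)
relates the Riccati equation with coefficients `b0, b1, b2` to the equation
`dy'/dt = D(t)·(c0 + c1·y' + c2·y'²)` identically in `y`, then necessarily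
`D²·c0·c2 = b0·b2`, `b1 + (1/2)(b2'/b2 − b0'/b0) = c1·D`, and
`G = √(b2·c0/(b0·c2))`. -/
theorem riccati_dilation_necessary_conditions
    (I : Set ℝ) (hIopen : IsOpen I) (hIint : Convex ℝ I)
    (b0 b1 b2 d0 d1 d2 : ℝ → ℝ)
    (hb0 : ∀ t ∈ I, HasDerivAt b0 (d0 t) t)
    (hb1 : ∀ t ∈ I, HasDerivAt b1 (d1 t) t)
    (hb2 : ∀ t ∈ I, HasDerivAt b2 (d2 t) t)
    (hne : ∀ t ∈ I, b0 t * b2 t ≠ 0)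
    (c0 c1 c2 : ℝ) (hc : c0 * c2 ≠ 0)
    (D G G' : ℝ → ℝ)
    (hGd : ∀ t ∈ I, HasDerivAt G (G' t) t)
    (hGpos : ∀ t ∈ I, G t > 0)
    (hid : ∀ t ∈ I, ∀ y : ℝ,
      G' t * y + G t * (b0 t + b1 t * y + b2 t * y^2)
        = D t * (c0 + c1 * (G t * y) + c2 * (G t)^2 * y^2)) :
    ∀ t ∈ I,
      (D t)^2 * c0 * c2 = b0 t * b2 t ∧
      b1 t + (1/2) * (d2 t / b2 t - d0 t / b0 t) = c1 * D t ∧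
      G t = Real.sqrt (b2 t * c0 / (b0 t * c2)) :=
  riccati_dilation_necessary_conditions_general I hIopen b0 b1 b2 d0 d2 hb0 hb2 hne c0 c1 c2 hc D G
    G' hGd hGpos hid
end

section
/- Let I ⊆ ℝ be an open interval and let b0, b1, b2 : I → ℝ be differentiable with b0(t)·b2(t) ≠ 0 for all t ∈ I. Suppose there exist real constants K and L with L/(b0(t)·b2(t)) > 0 for all t ∈ I such that (b1(t) + (1/2)·(b2'(t)/b2(t) − b0'(t)/b0(t)))·√(L/(b0(t)·b2(t))) = K for all t ∈ I. Then there exist constants c0, c2 with c0·c2 = L, a positive differentiable function G : I → ℝ, and the function D(t) = √(b0(t)·b2(t)/L) such that for every differentiable solution y : I → ℝ of y' = b0(t) + b1(t)·y + b2(t)·y², the function z = G·y satisfies z'(t) = D(t)·(c0 + K·z(t) + c2·z(t)²) on I. -/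
/-!
Rescaling a solution `y` by a positive factor `G` turns `y' = b₀ + b₁ y + b₂ y²` into
`z' = G b₀ + (G'/G + b₁) z + (b₂/G) z²` for `z = G y`. The choice `G = √(b₂/(L b₀))` makes
`G b₀ = ε D` and `b₂/G = ε L D`, where `D = √(b₀ b₂/L)` and `ε = ±1` is the sign of `b₀`
(constant on the interval `I`), while `G'/G = (b₂'/b₂ - b₀'/b₀)/2`; so the hypothesis on `K`
says exactly that the linear coefficient equals `K D`.
-/

lemma IsPreconnected.exists_abs_eq_mul {I : Set ℝ} (hI : IsPreconnected I) {f : ℝ → ℝ}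
    (hf : ContinuousOn f I) (hne : ∀ t ∈ I, f t ≠ 0) :
    ∃ ε : ℝ, ε * ε = 1 ∧ ∀ t ∈ I, |f t| = ε * f t := by
  rcases hI.eq_or_eq_neg_of_sq_eq hf.abs hf (fun t _ => sq_abs (f t)) (hne _ ·) with h | h
  · exact ⟨1, one_mul 1, fun t ht => (h ht).trans (one_mul _).symm⟩
  · exact ⟨-1, by norm_num, fun t ht => (h ht).trans (neg_one_mul _).symm⟩

section Coefficients

variable {L a b : ℝ}

lemma ne_zero_of_div_mul_pos (h : 0 < L / (a * b)) : L ≠ 0 ∧ a ≠ 0 ∧ b ≠ 0 := by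
  have hab : a * b ≠ 0 := fun h0 => by simp [h0] at h
  exact ⟨fun h0 => by simp [h0] at h, left_ne_zero_of_mul hab, right_ne_zero_of_mul hab⟩

lemma div_mul_pos_of_div_mul_pos (h : 0 < L / (a * b)) : 0 < b / (L * a) := by
  obtain ⟨-, ha, hb⟩ := ne_zero_of_div_mul_pos h
  rw [show b / (L * a) = b ^ 2 / (L / (a * b) * (a * b) ^ 2) by field_simp]
  positivity

lemma abs_mul_sqrt_div_mul (ha : a ≠ 0) : |a| * √(b / (L * a)) = √(a * b / L) := by
  rw [← Real.sqrt_sq_eq_abs, ← Real.sqrt_mul (sq_nonneg a)]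
  congr 1
  field_simp

lemma sqrt_div_mul_mul_eq {ε : ℝ} (ha : a ≠ 0) (hε : ε * ε = 1) (habs : |a| = ε * a) :
    √(b / (L * a)) * a = √(a * b / L) * ε := by
  linear_combination ε * abs_mul_sqrt_div_mul (b := b) (L := L) ha
    - ε * √(b / (L * a)) * habs - a * √(b / (L * a)) * hε

lemma mul_sqrt_div_mul_eq {ε : ℝ} (h : 0 < L / (a * b)) (hε : ε * ε = 1) (habs : |a| = ε * a) :
    b * √(b / (L * a)) = √(a * b / L) * (ε * L) * √(b / (L * a)) ^ 2 := by
  obtain ⟨hL, ha, -⟩ := ne_zero_of_div_mul_pos h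
  have hsq : L * a * √(b / (L * a)) ^ 2 = b := by
    rw [Real.sq_sqrt (div_mul_pos_of_div_mul_pos h).le]
    field_simp
  rw [← abs_mul_sqrt_div_mul ha, habs]
  linear_combination (-√(b / (L * a))) * hsq - L * a * √(b / (L * a)) ^ 3 * hε

lemma sqrt_div_mul_eq_of_mul_sqrt_eq {β K : ℝ} (h : 0 < L / (a * b))
    (hK : β * √(L / (a * b)) = K) : √(a * b / L) * K = β := by
  have hS : 0 < √(L / (a * b)) := Real.sqrt_pos.2 h
  rw [← inv_div L, Real.sqrt_inv, ← hK]
  field_simp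

end Coefficients

lemma HasDerivAt.sqrt_logDeriv {u : ℝ → ℝ} {v t : ℝ} (hu : HasDerivAt u (u t * v) t)
    (hpos : 0 < u t) : HasDerivAt (fun s => √(u s)) (√(u t) * v / 2) t := by
  refine (hu.sqrt hpos.ne').congr_deriv ?_
  have hsqrt := Real.sqrt_pos.2 hpos
  field_simp
  rw [Real.sq_sqrt hpos.le]
  ring

lemma HasDerivAt.div_const_mul_logDeriv {a b : ℝ → ℝ} {a' b' L t : ℝ} (ha : HasDerivAt a a' t)
    (hb : HasDerivAt b b' t) (hL : L ≠ 0) (ha0 : a t ≠ 0) (hb0 : b t ≠ 0) :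
    HasDerivAt (fun s => b s / (L * a s)) (b t / (L * a t) * (b' / b t - a' / a t)) t := by
  refine (hb.div (ha.const_mul L) (mul_ne_zero hL ha0)).congr_deriv ?_
  field_simp

lemma HasDerivAt.mul_of_riccati {G y : ℝ → ℝ} {G' b0 b1 b2 c0 c2 D K t : ℝ}
    (hG : HasDerivAt G G' t) (hy : HasDerivAt y (b0 + b1 * y t + b2 * y t ^ 2) t)
    (h0 : G t * b0 = D * c0) (h1 : G' + b1 * G t = D * K * G t)
    (h2 : b2 * G t = D * c2 * G t ^ 2) :
    HasDerivAt (fun s => G s * y s) (D * (c0 + K * (G t * y t) + c2 * (G t * y t) ^ 2)) t :=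
  (hG.mul hy).congr_deriv (by linear_combination h0 + h1 * y t + h2 * y t ^ 2)

theorem riccati_integrability_criterion_general
    (I : Set ℝ) (hIint : Convex ℝ I)
    (b0 b1 b2 d0 d2 : ℝ → ℝ)
    (hb0 : ∀ t ∈ I, HasDerivAt b0 (d0 t) t)
    (hb2 : ∀ t ∈ I, HasDerivAt b2 (d2 t) t)
    (K L : ℝ)
    (hL : ∀ t ∈ I, L / (b0 t * b2 t) > 0)
    (hK : ∀ t ∈ I,
      (b1 t + (1/2) * (d2 t / b2 t - d0 t / b0 t)) *
        Real.sqrt (L / (b0 t * b2 t)) = K) :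
    ∃ c0 c2 : ℝ, c0 * c2 = L ∧
      ∃ G : ℝ → ℝ, (∀ t ∈ I, 0 < G t) ∧ (∀ t ∈ I, DifferentiableAt ℝ G t) ∧
        ∀ y : ℝ → ℝ,
          (∀ t ∈ I, HasDerivAt y (b0 t + b1 t * y t + b2 t * (y t)^2) t) →
          ∀ t ∈ I, HasDerivAt (fun s => G s * y s)
            (Real.sqrt (b0 t * b2 t / L) *
              (c0 + K * (G t * y t) + c2 * (G t * y t)^2)) t := by
  have hnz := fun t ht => ne_zero_of_div_mul_pos (hL t ht)
  obtain ⟨ε, hε, habs⟩ := hIint.isPreconnected.exists_abs_eq_mul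
    (fun t ht => (hb0 t ht).continuousAt.continuousWithinAt) (fun t ht => (hnz t ht).2.1)
  have hG : ∀ t ∈ I, HasDerivAt (fun s => √(b2 s / (L * b0 s)))
      (√(b2 t / (L * b0 t)) * (d2 t / b2 t - d0 t / b0 t) / 2) t := fun t ht =>
    ((hb0 t ht).div_const_mul_logDeriv (hb2 t ht) (hnz t ht).1 (hnz t ht).2.1
      (hnz t ht).2.2).sqrt_logDeriv (div_mul_pos_of_div_mul_pos (hL t ht))
  refine ⟨ε, ε * L, by linear_combination L * hε, fun s => √(b2 s / (L * b0 s)),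
    fun t ht => Real.sqrt_pos.2 (div_mul_pos_of_div_mul_pos (hL t ht)),
    fun t ht => (hG t ht).differentiableAt,
    fun y hy t ht => (hG t ht).mul_of_riccati (hy t ht)
      (sqrt_div_mul_mul_eq (hnz t ht).2.1 hε (habs t ht)) ?_
      (mul_sqrt_div_mul_eq (hL t ht) hε (habs t ht))⟩
  rw [sqrt_div_mul_eq_of_mul_sqrt_eq (hL t ht) (hK t ht)]
  ring

/-- Sufficient integrability condition for the Riccati equation:
if there are constants `K, L` with `L/(b0·b2) > 0` and
`(b1 + (1/2)(b2'/b2 − b0'/b0))·√(L/(b0·b2)) = K` on `I`, then there are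
constants `c0, c2` with `c0·c2 = L` and a positive differentiable dilation `G`
so that `z = G·y` transforms any solution of `y' = b0 + b1·y + b2·y²` into a
solution of `z' = D(t)·(c0 + K·z + c2·z²)` with `D(t) = √(b0·b2/L)`. -/
theorem riccati_integrability_criterion
    (I : Set ℝ) (hIopen : IsOpen I) (hIint : Convex ℝ I)
    (b0 b1 b2 d0 d1 d2 : ℝ → ℝ)
    (hb0 : ∀ t ∈ I, HasDerivAt b0 (d0 t) t)
    (hb1 : ∀ t ∈ I, HasDerivAt b1 (d1 t) t)
    (hb2 : ∀ t ∈ I, HasDerivAt b2 (d2 t) t)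
    (hne : ∀ t ∈ I, b0 t * b2 t ≠ 0)
    (K L : ℝ)
    (hL : ∀ t ∈ I, L / (b0 t * b2 t) > 0)
    (hK : ∀ t ∈ I,
      (b1 t + (1/2) * (d2 t / b2 t - d0 t / b0 t)) *
        Real.sqrt (L / (b0 t * b2 t)) = K) :
    ∃ c0 c2 : ℝ, c0 * c2 = L ∧
      ∃ G : ℝ → ℝ, (∀ t ∈ I, 0 < G t) ∧ (∀ t ∈ I, DifferentiableAt ℝ G t) ∧
        ∀ y : ℝ → ℝ,
          (∀ t ∈ I, HasDerivAt y (b0 t + b1 t * y t + b2 t * (y t)^2) t) →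
          ∀ t ∈ I, HasDerivAt (fun s => G s * y s)
            (Real.sqrt (b0 t * b2 t / L) *
              (c0 + K * (G t * y t) + c2 * (G t * y t)^2)) t :=
  riccati_integrability_criterion_general I hIint b0 b1 b2 d0 d2 hb0 hb2 K L hL hK
end

section
/- Let I ⊆ ℝ be an interval, let b0, b1, b2 : I → ℝ, and let α, β, γ, δ : I → ℝ be differentiable functions with α(t)·δ(t) − β(t)·γ(t) = 1 for all t ∈ I. Let x : I → ℝ be a differentiable solution of x' = b0(t) + b1(t)·x + b2(t)·x² such that γ(t)·x(t) + δ(t) ≠ 0 for all t ∈ I. Then the function y(t) = (α(t)·x(t) + β(t))/(γ(t)·x(t) + δ(t)) is differentiable and satisfies the Riccati equation y' = b0'(t)_new + b1'(t)_new·y + b2'(t)_new·y², where b2'_new = δ²·b2 − δ·γ·b1 + γ²·b0 + γ·δ' − δ·γ', b1'_new = −2·β·δ·b2 + (α·δ + β·γ)·b1 − 2·α·γ·b0 + δ·α' − α·δ' + β·γ' − γ·β', and b0'_new = β²·b2 − α·β·b1 + α²·b0 + α·β' − β·α'. -/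
/-!
Differentiating the quotient gives `y' = ((α'x + β')D - (αx + β)(γ'x + δ') + x') / D²` with
`D = γx + δ`. Since `αδ - βγ = 1`, the inverse Möbius map expresses `1/D = α - γy` and
`x/D = δy - β`, so each term of `y'` is a quadratic polynomial in `y`; collecting powers of `y`
gives the new coefficients.
-/

theorem HasDerivAt.linearFractional {𝕜 : Type*} [NontriviallyNormedField 𝕜]
    {a b c d x : 𝕜 → 𝕜} {a' b' c' d' x' t : 𝕜}
    (ha : HasDerivAt a a' t) (hb : HasDerivAt b b' t) (hc : HasDerivAt c c' t)
    (hd : HasDerivAt d d' t) (hx : HasDerivAt x x' t) (hden : c t * x t + d t ≠ 0) :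
    HasDerivAt (fun s => (a s * x s + b s) / (c s * x s + d s))
      (((a' * x t + b') * (c t * x t + d t) - (a t * x t + b t) * (c' * x t + d')
          + (a t * d t - b t * c t) * x') / (c t * x t + d t) ^ 2) t := by
  have h : HasDerivAt (fun s => (a s * x s + b s) / (c s * x s + d s)) _ t :=
    ((ha.mul hx).add hb).div ((hc.mul hx).add hd) hden
  convert h using 1
  simp only [Pi.add_apply, Pi.mul_apply]
  ring

section Field

variable {K : Type*} [Field K] {α β γ δ x y : K}

theorem inv_denom_eq_of_det_eq_one (hdet : α * δ - β * γ = 1) (hden : γ * x + δ ≠ 0)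
    (hy : y = (α * x + β) / (γ * x + δ)) : 1 / (γ * x + δ) = α - γ * y := by
  rw [hy, ← hdet]
  field_simp
  ring

theorem div_denom_eq_of_det_eq_one (hdet : α * δ - β * γ = 1) (hden : γ * x + δ ≠ 0)
    (hy : y = (α * x + β) / (γ * x + δ)) : x / (γ * x + δ) = δ * y - β := by
  rw [hy, mul_div_assoc', div_sub' hden, div_left_inj' hden]
  linear_combination -x * hdet

theorem linearFractional_riccati_deriv_eq (dα dβ dγ dδ b0 b1 b2 : K)
    (hdet : α * δ - β * γ = 1) (hden : γ * x + δ ≠ 0) (hy : y = (α * x + β) / (γ * x + δ)) :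
    ((dα * x + dβ) * (γ * x + δ) - (α * x + β) * (dγ * x + dδ)
        + (α * δ - β * γ) * (b0 + b1 * x + b2 * x ^ 2)) / (γ * x + δ) ^ 2
      = (β ^ 2 * b2 - α * β * b1 + α ^ 2 * b0 + α * dβ - β * dα)
        + (-(2 * β * δ * b2) + (α * δ + β * γ) * b1 - 2 * α * γ * b0
            + δ * dα - α * dδ + β * dγ - γ * dβ) * y
        + (δ ^ 2 * b2 - δ * γ * b1 + γ ^ 2 * b0 + γ * dδ - δ * dγ) * y ^ 2 := by
  have hu := inv_denom_eq_of_det_eq_one hdet hden hy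
  have hv := div_denom_eq_of_det_eq_one hdet hden hy
  calc _ = dα * (x / (γ * x + δ)) + dβ * (1 / (γ * x + δ))
          - y * (dγ * (x / (γ * x + δ)) + dδ * (1 / (γ * x + δ)))
          + b0 * (1 / (γ * x + δ)) ^ 2 + b1 * (x / (γ * x + δ)) * (1 / (γ * x + δ))
          + b2 * (x / (γ * x + δ)) ^ 2 := by
        rw [hdet, hy]
        field_simp
        ring
    _ = _ := by
        rw [hu, hv]
        ring

end Field

theorem riccati_sl2_action_general
    (I : Set ℝ)
    (b0 b1 b2 α β γ δ dα dβ dγ dδ x : ℝ → ℝ)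
    (hα : ∀ t ∈ I, HasDerivAt α (dα t) t)
    (hβ : ∀ t ∈ I, HasDerivAt β (dβ t) t)
    (hγ : ∀ t ∈ I, HasDerivAt γ (dγ t) t)
    (hδ : ∀ t ∈ I, HasDerivAt δ (dδ t) t)
    (hdet : ∀ t ∈ I, α t * δ t - β t * γ t = 1)
    (hx : ∀ t ∈ I, HasDerivAt x (b0 t + b1 t * x t + b2 t * (x t)^2) t)
    (hden : ∀ t ∈ I, γ t * x t + δ t ≠ 0) :
    ∀ t ∈ I, HasDerivAt (fun s => (α s * x s + β s) / (γ s * x s + δ s))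
      (((β t)^2 * b2 t - α t * β t * b1 t + (α t)^2 * b0 t
          + α t * dβ t - β t * dα t)
        + (-(2 * β t * δ t * b2 t) + (α t * δ t + β t * γ t) * b1 t
            - 2 * α t * γ t * b0 t
            + δ t * dα t - α t * dδ t + β t * dγ t - γ t * dβ t)
          * ((α t * x t + β t) / (γ t * x t + δ t))
        + ((δ t)^2 * b2 t - δ t * γ t * b1 t + (γ t)^2 * b0 t
            + γ t * dδ t - δ t * dγ t)
          * ((α t * x t + β t) / (γ t * x t + δ t))^2) t := by
  intro t ht
  exact ((hα t ht).linearFractional (hβ t ht) (hγ t ht) (hδ t ht) (hx t ht) (hden t ht)).congr_deriv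
    (linearFractional_riccati_deriv_eq _ _ _ _ _ _ _ (hdet t ht) (hden t ht) rfl)

/-- A curve `A(t) = [[α, β], [γ, δ]]` in `SL(2, ℝ)` acts on solutions
of the Riccati equation `x' = b0 + b1·x + b2·x²` by the fractional linear
transformation `y = (α·x + β)/(γ·x + δ)`, producing a solution of a new Riccati
equation with the transformed coefficients. -/
theorem riccati_sl2_action
    (I : Set ℝ) (hI : Convex ℝ I)
    (b0 b1 b2 α β γ δ dα dβ dγ dδ x : ℝ → ℝ)
    (hα : ∀ t ∈ I, HasDerivAt α (dα t) t)
    (hβ : ∀ t ∈ I, HasDerivAt β (dβ t) t)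
    (hγ : ∀ t ∈ I, HasDerivAt γ (dγ t) t)
    (hδ : ∀ t ∈ I, HasDerivAt δ (dδ t) t)
    (hdet : ∀ t ∈ I, α t * δ t - β t * γ t = 1)
    (hx : ∀ t ∈ I, HasDerivAt x (b0 t + b1 t * x t + b2 t * (x t)^2) t)
    (hden : ∀ t ∈ I, γ t * x t + δ t ≠ 0) :
    ∀ t ∈ I, HasDerivAt (fun s => (α s * x s + β s) / (γ s * x s + δ s))
      (((β t)^2 * b2 t - α t * β t * b1 t + (α t)^2 * b0 t
          + α t * dβ t - β t * dα t)
        + (-(2 * β t * δ t * b2 t) + (α t * δ t + β t * γ t) * b1 t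
            - 2 * α t * γ t * b0 t
            + δ t * dα t - α t * dδ t + β t * dγ t - γ t * dβ t)
          * ((α t * x t + β t) / (γ t * x t + δ t))
        + ((δ t)^2 * b2 t - δ t * γ t * b1 t + (γ t)^2 * b0 t
            + γ t * dδ t - δ t * dγ t)
          * ((α t * x t + β t) / (γ t * x t + δ t))^2) t :=
  riccati_sl2_action_general I b0 b1 b2 α β γ δ dα dβ dγ dδ x hα hβ hγ hδ hdet hx hden
end

section
/- Let I ⊆ ℝ be an interval, let b0, b1, b2 : I → ℝ, and let x1, x2, x3, x : I → ℝ be four differentiable solutions of the Riccati equation x' = b0(t) + b1(t)·x + b2(t)·x². Assume x(t) ≠ x1(t), x(t) ≠ x2(t), x3(t) ≠ x1(t), and x3(t) ≠ x2(t) for all t ∈ I. Then the cross-ratio t ↦ ((x(t) − x1(t))·(x3(t) − x2(t))) / ((x(t) − x2(t))·(x3(t) − x1(t))) is constant on I. -/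
/-!
The difference of two solutions `x`, `y` of a Riccati equation solves the linear equation
`(x - y)' = (b₁ + b₂ (x + y)) (x - y)`. Hence each factor `xᵢ - xⱼ` of the cross-ratio has
logarithmic derivative `b₁ + b₂ (xᵢ + xⱼ)`, and these four logarithmic derivatives cancel in the
cross-ratio, whose derivative therefore vanishes on the interval.
-/

section LogDeriv

variable {𝕜 : Type*} [NontriviallyNormedField 𝕜] {f g : 𝕜 → 𝕜} {a b t : 𝕜}

theorem HasDerivAt.sub_of_riccati {p q r : 𝕜}
    (hf : HasDerivAt f (p + q * f t + r * f t ^ 2) t)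
    (hg : HasDerivAt g (p + q * g t + r * g t ^ 2) t) :
    HasDerivAt (f - g) ((q + r * (f t + g t)) * (f - g) t) t :=
  (hf.sub hg).congr_deriv (by simp only [Pi.sub_apply]; ring)

theorem HasDerivAt.mul_of_logDeriv (hf : HasDerivAt f (a * f t) t)
    (hg : HasDerivAt g (b * g t) t) :
    HasDerivAt (f * g) ((a + b) * (f * g) t) t :=
  (hf.mul hg).congr_deriv (by simp only [Pi.mul_apply]; ring)

theorem HasDerivAt.div_of_logDeriv (hf : HasDerivAt f (a * f t) t)
    (hg : HasDerivAt g (b * g t) t) (hg₀ : g t ≠ 0) :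
    HasDerivAt (f / g) ((a - b) * (f / g) t) t :=
  (hf.div hg hg₀).congr_deriv (by simp only [Pi.div_apply]; field_simp)

end LogDeriv

theorem Convex.eq_of_forall_hasDerivAt_zero {E : Type*} [NormedAddCommGroup E] [NormedSpace ℝ E]
    {s : Set ℝ} (hs : Convex ℝ s) {f : ℝ → E} (hf : ∀ t ∈ s, HasDerivAt f 0 t) :
    ∀ x ∈ s, ∀ y ∈ s, f x = f y := by
  intro x hx y hy
  have h := hs.norm_image_sub_le_of_norm_hasDerivWithin_le (C := 0)
    (fun t ht => (hf t ht).hasDerivWithinAt) (fun _ _ => norm_zero.le) hy hx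
  rwa [zero_mul, norm_le_zero_iff, sub_eq_zero] at h

theorem riccati_cross_ratio_constant_general
    (I : Set ℝ) (hI : Convex ℝ I)
    (b0 b1 b2 x1 x2 x3 x : ℝ → ℝ)
    (h1 : ∀ t ∈ I, HasDerivAt x1 (b0 t + b1 t * x1 t + b2 t * (x1 t)^2) t)
    (h2 : ∀ t ∈ I, HasDerivAt x2 (b0 t + b1 t * x2 t + b2 t * (x2 t)^2) t)
    (h3 : ∀ t ∈ I, HasDerivAt x3 (b0 t + b1 t * x3 t + b2 t * (x3 t)^2) t)
    (hx : ∀ t ∈ I, HasDerivAt x (b0 t + b1 t * x t + b2 t * (x t)^2) t)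
    (hne2 : ∀ t ∈ I, x t ≠ x2 t)
    (hne3 : ∀ t ∈ I, x3 t ≠ x1 t) :
    ∀ s ∈ I, ∀ t ∈ I,
      ((x s - x1 s) * (x3 s - x2 s)) / ((x s - x2 s) * (x3 s - x1 s))
        = ((x t - x1 t) * (x3 t - x2 t)) / ((x t - x2 t) * (x3 t - x1 t)) := by
  refine hI.eq_of_forall_hasDerivAt_zero (f := (x - x1) * (x3 - x2) / ((x - x2) * (x3 - x1)))
    fun t ht => ?_
  have hden : ((x - x2) * (x3 - x1)) t ≠ 0 :=
    mul_ne_zero (sub_ne_zero.mpr (hne2 t ht)) (sub_ne_zero.mpr (hne3 t ht))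
  have hcross := (((hx t ht).sub_of_riccati (h1 t ht)).mul_of_logDeriv
    ((h3 t ht).sub_of_riccati (h2 t ht))).div_of_logDeriv
    (((hx t ht).sub_of_riccati (h2 t ht)).mul_of_logDeriv
      ((h3 t ht).sub_of_riccati (h1 t ht))) hden
  exact hcross.congr_deriv (by ring)

/-- The cross-ratio of four solutions of a Riccati equation
`x' = b0 + b1·x + b2·x²` is constant — the nonlinear superposition rule. -/
theorem riccati_cross_ratio_constant
    (I : Set ℝ) (hI : Convex ℝ I)
    (b0 b1 b2 x1 x2 x3 x : ℝ → ℝ)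
    (h1 : ∀ t ∈ I, HasDerivAt x1 (b0 t + b1 t * x1 t + b2 t * (x1 t)^2) t)
    (h2 : ∀ t ∈ I, HasDerivAt x2 (b0 t + b1 t * x2 t + b2 t * (x2 t)^2) t)
    (h3 : ∀ t ∈ I, HasDerivAt x3 (b0 t + b1 t * x3 t + b2 t * (x3 t)^2) t)
    (hx : ∀ t ∈ I, HasDerivAt x (b0 t + b1 t * x t + b2 t * (x t)^2) t)
    (hne1 : ∀ t ∈ I, x t ≠ x1 t) (hne2 : ∀ t ∈ I, x t ≠ x2 t)
    (hne3 : ∀ t ∈ I, x3 t ≠ x1 t) (hne4 : ∀ t ∈ I, x3 t ≠ x2 t) :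
    ∀ s ∈ I, ∀ t ∈ I,
      ((x s - x1 s) * (x3 s - x2 s)) / ((x s - x2 s) * (x3 s - x1 s))
        = ((x t - x1 t) * (x3 t - x2 t)) / ((x t - x2 t) * (x3 t - x1 t)) :=
  riccati_cross_ratio_constant_general I hI b0 b1 b2 x1 x2 x3 x h1 h2 h3 hx hne2 hne3
end

section
/- Let I ⊆ ℝ be an interval and ω : I → ℝ. Let x, y : I → ℝ be twice differentiable with y(t) ≠ 0 for all t ∈ I, satisfying x'' = −ω(t)²·x and y'' = −ω(t)²·y + 1/y³ on I. Then the Ermakov invariant t ↦ (x(t)/y(t))² + (x(t)·y'(t) − y(t)·x'(t))² is constant on I. -/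
/-! The Wronskian `W = x·y' − y·x'` of the pair satisfies `W' = x·y'' − y·x''`, in which the
`ω²` terms cancel, leaving `W' = x / y³`; meanwhile `(x / y)' = −W / y²`. Hence
`((x / y)² + W²)' = −2 x W / y³ + 2 W x / y³ = 0`, and a function with vanishing derivative on
a convex subset of `ℝ` is constant there. -/

theorem Convex.is_const_of_hasDerivAt_eq_zero {𝕜 G : Type*} [RCLike 𝕜] [NormedAddCommGroup G]
    [NormedSpace 𝕜 G] {f : 𝕜 → G} {s : Set 𝕜} (hs : Convex ℝ s)
    (hf : ∀ t ∈ s, HasDerivAt f 0 t) {a b : 𝕜} (ha : a ∈ s) (hb : b ∈ s) : f a = f b := by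
  have h := hs.norm_image_sub_le_of_norm_hasDerivWithin_le (C := 0)
    (fun t ht => (hf t ht).hasDerivWithinAt) (fun _ _ => norm_zero.le) ha hb
  rw [zero_mul, norm_le_zero_iff, sub_eq_zero] at h
  exact h.symm

namespace Ermakov

variable {x y vx vy : ℝ → ℝ} {t ax ay : ℝ}

noncomputable def wronskian (x y vx vy : ℝ → ℝ) (t : ℝ) : ℝ := x t * vy t - y t * vx t

noncomputable def invariant (x y vx vy : ℝ → ℝ) (t : ℝ) : ℝ :=
  (x t / y t) ^ 2 + wronskian x y vx vy t ^ 2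

theorem hasDerivAt_wronskian (hx : HasDerivAt x (vx t) t) (hvx : HasDerivAt vx ax t)
    (hy : HasDerivAt y (vy t) t) (hvy : HasDerivAt vy ay t) :
    HasDerivAt (wronskian x y vx vy) (x t * ay - y t * ax) t :=
  ((hx.mul hvy).sub (hy.mul hvx)).congr_deriv (by ring)

theorem hasDerivAt_div (hx : HasDerivAt x (vx t) t) (hy : HasDerivAt y (vy t) t)
    (hy0 : y t ≠ 0) :
    HasDerivAt (fun t => x t / y t) (-wronskian x y vx vy t / y t ^ 2) t :=
  (hx.div hy hy0).congr_deriv (by rw [wronskian]; ring)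

theorem hasDerivAt_invariant (ω : ℝ) (hy0 : y t ≠ 0)
    (hx : HasDerivAt x (vx t) t) (hvx : HasDerivAt vx (-ω ^ 2 * x t) t)
    (hy : HasDerivAt y (vy t) t) (hvy : HasDerivAt vy (-ω ^ 2 * y t + 1 / y t ^ 3) t) :
    HasDerivAt (invariant x y vx vy) 0 t := by
  have hW : HasDerivAt (wronskian x y vx vy) (x t / y t ^ 3) t :=
    (hasDerivAt_wronskian hx hvx hy hvy).congr_deriv (by field_simp; ring)
  refine (((hasDerivAt_div hx hy hy0).pow 2).add (hW.pow 2)).congr_deriv ?_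
  simp only [Nat.cast_ofNat, Nat.add_one_sub_one, pow_one]
  field_simp
  ring

end Ermakov

/-- The Ermakov invariant `(x/y)² + (x·y' − y·x')²` of the Ermakov
system `x'' = −ω(t)²·x`, `y'' = −ω(t)²·y + 1/y³` is constant. -/
theorem ermakov_invariant_constant
    (I : Set ℝ) (hI : Convex ℝ I) (ω x y vx vy : ℝ → ℝ)
    (hy0 : ∀ t ∈ I, y t ≠ 0)
    (hx : ∀ t ∈ I, HasDerivAt x (vx t) t)
    (hvx : ∀ t ∈ I, HasDerivAt vx (-(ω t)^2 * x t) t)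
    (hy : ∀ t ∈ I, HasDerivAt y (vy t) t)
    (hvy : ∀ t ∈ I, HasDerivAt vy (-(ω t)^2 * y t + 1 / (y t)^3) t) :
    ∀ s ∈ I, ∀ t ∈ I,
      (x s / y s)^2 + (x s * vy s - y s * vx s)^2
        = (x t / y t)^2 + (x t * vy t - y t * vx t)^2 := fun _ hs _ ht =>
  hI.is_const_of_hasDerivAt_eq_zero (f := Ermakov.invariant x y vx vy)
    (fun u hu => Ermakov.hasDerivAt_invariant (ω u) (hy0 u hu) (hx u hu) (hvx u hu) (hy u hu)
      (hvy u hu)) hs ht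
end

section
/- Let I ⊆ ℝ be an interval, ω : I → ℝ, and f, g : ℝ → ℝ continuous. Let x, y : I → ℝ be twice differentiable with x(t) > 0 and y(t) > 0 for all t ∈ I, satisfying the generalized Ermakov system x'' = (1/x³)·f(y/x) − ω(t)²·x and y'' = (1/y³)·g(y/x) − ω(t)²·y on I. Let F be a differentiable function on (0,∞) with F'(u) = −(1/u³)·f(1/u) + u·g(1/u) for all u > 0. Then the function t ↦ (1/2)·(x(t)·y'(t) − y(t)·x'(t))² + F(x(t)/y(t)) is constant on I. -/
/-!
With `W = x y' − y x'` the Wronskian, the `ω²`-terms cancel in `W' = x y'' − y x''`,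
leaving `W' = x g(y/x)/y³ − y f(y/x)/x³`. On the other hand `(x/y)' = −W/y²`, and by the
choice of `F` this makes `F(x/y)' = −W · W'`. Hence `W²/2 + F(x/y)` has zero derivative
on the interval.
-/

theorem Convex.eq_of_hasDerivWithinAt_zero {E : Type*} [NormedAddCommGroup E]
    [NormedSpace ℝ E] {s : Set ℝ} {φ : ℝ → E} (hs : Convex ℝ s)
    (hφ : ∀ t ∈ s, HasDerivWithinAt φ 0 s t)
    {a b : ℝ} (ha : a ∈ s) (hb : b ∈ s) : φ a = φ b := by
  have h := hs.norm_image_sub_le_of_norm_hasDerivWithin_le (C := 0) hφ (by simp) hb ha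
  rwa [zero_mul, norm_le_zero_iff, sub_eq_zero] at h

section Wronskian

variable {x y vx vy : ℝ → ℝ} {t ax ay : ℝ}

theorem hasDerivAt_wronskian (hx : HasDerivAt x (vx t) t) (hy : HasDerivAt y (vy t) t)
    (hvx : HasDerivAt vx ax t) (hvy : HasDerivAt vy ay t) :
    HasDerivAt (fun s => x s * vy s - y s * vx s) (x t * ay - y t * ax) t :=
  ((hx.mul hvy).sub (hy.mul hvx)).congr_deriv (by ring)

theorem hasDerivAt_div_eq_neg_wronskian (hx : HasDerivAt x (vx t) t)
    (hy : HasDerivAt y (vy t) t) (hy₀ : y t ≠ 0) :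
    HasDerivAt (fun s => x s / y s) (-(x t * vy t - y t * vx t) / y t ^ 2) t :=
  (hx.div hy hy₀).congr_deriv (by ring)

end Wronskian

theorem hasDerivAt_ermakov_invariant {f g F x y vx vy : ℝ → ℝ} {t c : ℝ}
    (hx₀ : x t ≠ 0) (hy₀ : y t ≠ 0)
    (hx : HasDerivAt x (vx t) t)
    (hvx : HasDerivAt vx ((1 / (x t)^3) * f (y t / x t) - c * x t) t)
    (hy : HasDerivAt y (vy t) t)
    (hvy : HasDerivAt vy ((1 / (y t)^3) * g (y t / x t) - c * y t) t)
    (hF : HasDerivAt F (-(1 / (x t / y t)^3) * f (1 / (x t / y t))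
      + (x t / y t) * g (1 / (x t / y t))) (x t / y t)) :
    HasDerivAt (fun s => (1/2) * (x s * vy s - y s * vx s)^2 + F (x s / y s)) 0 t := by
  have hW := ((hasDerivAt_wronskian hx hy hvx hvy).pow 2).const_mul (1/2 : ℝ)
  have hFu := hF.comp t (hasDerivAt_div_eq_neg_wronskian hx hy hy₀)
  refine (hW.add hFu).congr_deriv ?_
  rw [one_div_div]
  field_simp
  ring

theorem generalized_ermakov_first_integral_general
    (I : Set ℝ) (hI : Convex ℝ I) (ω f g : ℝ → ℝ)
    (x y vx vy : ℝ → ℝ)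
    (hxpos : ∀ t ∈ I, 0 < x t) (hypos : ∀ t ∈ I, 0 < y t)
    (hx : ∀ t ∈ I, HasDerivAt x (vx t) t)
    (hvx : ∀ t ∈ I, HasDerivAt vx
      ((1 / (x t)^3) * f (y t / x t) - (ω t)^2 * x t) t)
    (hy : ∀ t ∈ I, HasDerivAt y (vy t) t)
    (hvy : ∀ t ∈ I, HasDerivAt vy
      ((1 / (y t)^3) * g (y t / x t) - (ω t)^2 * y t) t)
    (F : ℝ → ℝ)
    (hF : ∀ u : ℝ, 0 < u →
      HasDerivAt F (-(1 / u^3) * f (1 / u) + u * g (1 / u)) u) :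
    ∀ s ∈ I, ∀ t ∈ I,
      (1/2) * (x s * vy s - y s * vx s)^2 + F (x s / y s)
        = (1/2) * (x t * vy t - y t * vx t)^2 + F (x t / y t) := by
  intro s hs t ht
  refine hI.eq_of_hasDerivWithinAt_zero
    (φ := fun r => (1/2) * (x r * vy r - y r * vx r)^2 + F (x r / y r)) (fun r hr => ?_) hs ht
  exact (hasDerivAt_ermakov_invariant (hxpos r hr).ne' (hypos r hr).ne' (hx r hr) (hvx r hr)
    (hy r hr) (hvy r hr) (hF _ (div_pos (hxpos r hr) (hypos r hr)))).hasDerivWithinAt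

/-- First integral of the generalized Ermakov system
`x'' = x⁻³·f(y/x) − ω(t)²·x`, `y'' = y⁻³·g(y/x) − ω(t)²·y`: the quantity
`(1/2)·(x·y' − y·x')² + F(x/y)` is constant, where
`F'(u) = −u⁻³·f(1/u) + u·g(1/u)` on `(0, ∞)`. -/
theorem generalized_ermakov_first_integral
    (I : Set ℝ) (hI : Convex ℝ I) (ω f g : ℝ → ℝ)
    (hf : Continuous f) (hg : Continuous g)
    (x y vx vy : ℝ → ℝ)
    (hxpos : ∀ t ∈ I, 0 < x t) (hypos : ∀ t ∈ I, 0 < y t)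
    (hx : ∀ t ∈ I, HasDerivAt x (vx t) t)
    (hvx : ∀ t ∈ I, HasDerivAt vx
      ((1 / (x t)^3) * f (y t / x t) - (ω t)^2 * x t) t)
    (hy : ∀ t ∈ I, HasDerivAt y (vy t) t)
    (hvy : ∀ t ∈ I, HasDerivAt vy
      ((1 / (y t)^3) * g (y t / x t) - (ω t)^2 * y t) t)
    (F : ℝ → ℝ)
    (hF : ∀ u : ℝ, 0 < u →
      HasDerivAt F (-(1 / u^3) * f (1 / u) + u * g (1 / u)) u) :
    ∀ s ∈ I, ∀ t ∈ I,
      (1/2) * (x s * vy s - y s * vx s)^2 + F (x s / y s)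
        = (1/2) * (x t * vy t - y t * vx t)^2 + F (x t / y t) :=
  generalized_ermakov_first_integral_general I hI ω f g x y vx vy hxpos hypos hx hvx hy hvy F hF
end

section
/- Let I ⊆ ℝ be an interval, ω : I → ℝ, and k ∈ ℝ. Let x : I → ℝ be a twice differentiable solution of the Milne–Pinney equation x'' = −ω(t)²·x + k/x³ with x(t) ≠ 0 on I, and let y, z : I → ℝ be twice differentiable solutions of the harmonic oscillator equation u'' = −ω(t)²·u. Define W = y·z' − z·y', I1 = (1/2)·((y·x' − x·y')² + k·(y/x)²), and I2 = (1/2)·((x·z' − z·x')² + k·(z/x)²) (all three are constant on I). Then for all t ∈ I the identity (W²·x(t)² − 2·I2·y(t)² − 2·I1·z(t)²)² = 4·(4·I1·I2 − k·W²)·y(t)²·z(t)² holds; equivalently, x = (√2/W)·(I2·y² + I1·z² ± √(4·I1·I2 − k·W²)·y·z)^{1/2}. -/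
/-!
Differentiating, `W` and the Ermakov invariants have vanishing derivative: the `ω²` terms cancel
between the two factors, and in `I1` the Pinney term `k / x³` in `(y x' - x y')' = k y / x³` is
cancelled by the derivative of `k (y / x)²`, since `(y / x)' = -(y x' - x y') / x²`.
So all three are constant on the interval.

The superposition identity is then purely algebraic. With `p = y x' - x y'` and
`q = x z' - z x'` one has `x W = y q + z p`, and both sides of the identity reduce to
`4 y² z² (p q - k y z / x²)²`.
-/

theorem Convex.eq_of_forall_hasDerivAt_zero_s12 {I : Set ℝ} (hI : Convex ℝ I) {f : ℝ → ℝ}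
    (hf : ∀ t ∈ I, HasDerivAt f 0 t) {s t : ℝ} (hs : s ∈ I) (ht : t ∈ I) : f s = f t := by
  have h := hI.norm_image_sub_le_of_norm_hasDerivWithin_le (C := 0)
    (fun u hu => (hf u hu).hasDerivWithinAt) (fun _ _ => by simp) ht hs
  rwa [zero_mul, norm_le_zero_iff, sub_eq_zero] at h

section Derivatives

variable {x vx y vy z vz : ℝ → ℝ} {a k t : ℝ}

theorem hasDerivAt_wronskian_zero (hy : HasDerivAt y (vy t) t) (hvy : HasDerivAt vy (a * y t) t)
    (hz : HasDerivAt z (vz t) t) (hvz : HasDerivAt vz (a * z t) t) :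
    HasDerivAt (fun s => y s * vz s - z s * vy s) 0 t :=
  ((hy.mul hvz).sub (hz.mul hvy)).congr_deriv (by ring)

theorem hasDerivAt_ermakovInvariant_zero (hx0 : x t ≠ 0) (hx : HasDerivAt x (vx t) t)
    (hvx : HasDerivAt vx (a * x t + k / x t ^ 3) t) (hy : HasDerivAt y (vy t) t)
    (hvy : HasDerivAt vy (a * y t) t) :
    HasDerivAt (fun s => 1 / 2 * ((y s * vx s - x s * vy s) ^ 2 + k * (y s / x s) ^ 2)) 0 t := by
  have hp := (hy.mul hvx).sub (hx.mul hvy)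
  have hq := hy.div hx hx0
  refine (((hp.pow 2).add ((hq.pow 2).const_mul k)).const_mul (1 / 2)).congr_deriv ?_
  norm_num only [Pi.sub_apply, Pi.mul_apply, Pi.div_apply]
  field_simp
  ring

end Derivatives

theorem ermakov_superposition_algebraic {k x y z p q W I1 I2 : ℝ} (hx : x ≠ 0)
    (hW : x * W = y * q + z * p) (hI1 : I1 = 1 / 2 * (p ^ 2 + k * (y / x) ^ 2))
    (hI2 : I2 = 1 / 2 * (q ^ 2 + k * (z / x) ^ 2)) :
    (W ^ 2 * x ^ 2 - 2 * I2 * y ^ 2 - 2 * I1 * z ^ 2) ^ 2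
      = 4 * (4 * I1 * I2 - k * W ^ 2) * y ^ 2 * z ^ 2 := by
  obtain rfl : W = (y * q + z * p) / x := by rw [← hW]; field_simp
  subst hI1 hI2
  field_simp
  ring

/-- For a Milne–Pinney solution `x` and two oscillator solutions
`y, z` with the same frequency, the Wronskian `W` and the two Ermakov
invariants `I1, I2` are constant, and they satisfy the nonlinear superposition
identity `(W²·x² − 2·I2·y² − 2·I1·z²)² = 4·(4·I1·I2 − k·W²)·y²·z²`,
i.e. `x = (√2/W)·(I2·y² + I1·z² ± √(4·I1·I2 − k·W²)·y·z)^{1/2}`. -/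
theorem pinney_superposition_identity
    (I : Set ℝ) (hI : Convex ℝ I) (ω : ℝ → ℝ) (k : ℝ)
    (x vx y vy z vz : ℝ → ℝ)
    (hx0 : ∀ t ∈ I, x t ≠ 0)
    (hx : ∀ t ∈ I, HasDerivAt x (vx t) t)
    (hvx : ∀ t ∈ I, HasDerivAt vx (-(ω t)^2 * x t + k / (x t)^3) t)
    (hy : ∀ t ∈ I, HasDerivAt y (vy t) t)
    (hvy : ∀ t ∈ I, HasDerivAt vy (-(ω t)^2 * y t) t)
    (hz : ∀ t ∈ I, HasDerivAt z (vz t) t)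
    (hvz : ∀ t ∈ I, HasDerivAt vz (-(ω t)^2 * z t) t)
    (W I1 I2 : ℝ → ℝ)
    (hW : ∀ t, W t = y t * vz t - z t * vy t)
    (hI1 : ∀ t, I1 t = (1/2) * ((y t * vx t - x t * vy t)^2 + k * (y t / x t)^2))
    (hI2 : ∀ t, I2 t = (1/2) * ((x t * vz t - z t * vx t)^2 + k * (z t / x t)^2)) :
    (∀ s ∈ I, ∀ t ∈ I, W s = W t ∧ I1 s = I1 t ∧ I2 s = I2 t) ∧
    (∀ t ∈ I,
      ((W t)^2 * (x t)^2 - 2 * I2 t * (y t)^2 - 2 * I1 t * (z t)^2)^2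
        = 4 * (4 * I1 t * I2 t - k * (W t)^2) * (y t)^2 * (z t)^2) := by
  refine ⟨fun s hs t ht => ⟨?_, ?_, ?_⟩, fun t ht => ?_⟩
  · refine hI.eq_of_forall_hasDerivAt_zero_s12 (fun u hu => ?_) hs ht
    exact (hasDerivAt_wronskian_zero (hy u hu) (hvy u hu) (hz u hu) (hvz u hu)).congr_of_eventuallyEq
      (.of_forall hW)
  · refine hI.eq_of_forall_hasDerivAt_zero_s12 (fun u hu => ?_) hs ht
    exact (hasDerivAt_ermakovInvariant_zero (hx0 u hu) (hx u hu) (hvx u hu) (hy u hu)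
      (hvy u hu)).congr_of_eventuallyEq (.of_forall hI1)
  · refine hI.eq_of_forall_hasDerivAt_zero_s12 (fun u hu => ?_) hs ht
    exact (hasDerivAt_ermakovInvariant_zero (hx0 u hu) (hx u hu) (hvx u hu) (hz u hu)
      (hvz u hu)).congr_of_eventuallyEq (.of_forall fun s => by rw [hI2 s]; ring)
  · exact ermakov_superposition_algebraic (hx0 t ht) (by rw [hW t]; ring) (hI1 t) (hI2 t)
end

section
/- Let I ⊆ ℝ be an interval, ω : I → ℝ, and k ∈ ℝ. Let y, z : I → ℝ be twice differentiable solutions of u'' = −ω(t)²·u whose Wronskian W = y·z' − z·y' is a nonzero constant. Let I1, I2 be real constants with 4·I1·I2 − k·W² ≥ 0, and suppose the function h(t) = (2/W²)·(I2·y(t)² + I1·z(t)² + √(4·I1·I2 − k·W²)·y(t)·z(t)) satisfies h(t) > 0 for all t ∈ I. Then x(t) = √(h(t)) is twice differentiable and satisfies the Milne–Pinney equation x'' = −ω(t)²·x + k/x³ on I. -/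
/-!
With `Q = I2·y² + I1·z² + c·y·z` and `c² = 4·I1·I2 − k·W²`, the oscillator equation gives
`Q'' = 2·Q(y', z') − 2ω²·Q`, and the Lagrange-type identity for binary quadratic forms
`4·Q(y, z)·Q(y', z') − (Q')² = (4·I1·I2 − c²)·(y z' − z y')²` turns this into the
Ermakov invariant `2 Q Q'' − Q'² + 4ω² Q² = k W⁴`. For `h = 2Q/W²` it reads
`2 h h'' − h'² + 4ω² h² = 4k`, which is exactly the Milne–Pinney equation for `x = √h`,
since `x³ (x'' + ω² x) = (2 h h'' − h'² + 4ω² h²) / 4`.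
-/

open Real

def binaryQuadForm (a b c u v : ℝ) : ℝ := a * u ^ 2 + b * v ^ 2 + c * u * v

def binaryQuadForm.polar (a b c u₁ v₁ u₂ v₂ : ℝ) : ℝ :=
  2 * a * u₁ * u₂ + 2 * b * v₁ * v₂ + c * (u₁ * v₂ + v₁ * u₂)

namespace binaryQuadForm

theorem polar_mul_self (a b c u v r : ℝ) :
    polar a b c u v (r * u) (r * v) = 2 * r * binaryQuadForm a b c u v := by
  unfold polar binaryQuadForm; ring

theorem four_mul_mul_sub_polar_sq (a b c u₁ v₁ u₂ v₂ : ℝ) :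
    4 * binaryQuadForm a b c u₁ v₁ * binaryQuadForm a b c u₂ v₂
        - polar a b c u₁ v₁ u₂ v₂ ^ 2
      = (4 * a * b - c ^ 2) * (u₁ * v₂ - v₁ * u₂) ^ 2 := by
  unfold polar binaryQuadForm; ring

end binaryQuadForm

section Derivatives

variable {y vy z vz : ℝ → ℝ} {t : ℝ}

theorem hasDerivAt_binaryQuadForm (a b c : ℝ)
    (hy : HasDerivAt y (vy t) t) (hz : HasDerivAt z (vz t) t) :
    HasDerivAt (fun s => binaryQuadForm a b c (y s) (z s))
      (binaryQuadForm.polar a b c (y t) (z t) (vy t) (vz t)) t := by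
  have := (((hy.pow 2).const_mul a).add ((hz.pow 2).const_mul b)).add
    ((hy.const_mul c).mul hz)
  refine this.congr_deriv ?_
  unfold binaryQuadForm.polar
  ring

theorem hasDerivAt_binaryQuadForm_polar (a b c : ℝ) {ay az : ℝ}
    (hy : HasDerivAt y (vy t) t) (hz : HasDerivAt z (vz t) t)
    (hvy : HasDerivAt vy ay t) (hvz : HasDerivAt vz az t) :
    HasDerivAt (fun s => binaryQuadForm.polar a b c (y s) (z s) (vy s) (vz s))
      (2 * binaryQuadForm a b c (vy t) (vz t)
        + binaryQuadForm.polar a b c (y t) (z t) ay az) t := by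
  have := (((hy.mul hvy).const_mul (2 * a)).add ((hz.mul hvz).const_mul (2 * b))).add
    (((hy.mul hvz).add (hz.mul hvy)).const_mul c)
  refine (this.congr_deriv ?_).congr_of_eventuallyEq (.of_forall fun s => ?_)
  · unfold binaryQuadForm binaryQuadForm.polar
    ring
  · simp only [binaryQuadForm.polar, Pi.add_apply, Pi.mul_apply]
    ring

end Derivatives

theorem hasDerivAt_deriv_sqrt {h h' : ℝ → ℝ} {h'' t : ℝ}
    (hh : HasDerivAt h (h' t) t) (hh' : HasDerivAt h' h'' t) (ht : 0 < h t) :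
    HasDerivAt (fun s => h' s / (2 * √(h s)))
      ((2 * h t * h'' - h' t ^ 2) / (4 * √(h t) ^ 3)) t := by
  have hsqrt : 0 < √(h t) := sqrt_pos.mpr ht
  refine (hh'.div ((hh.sqrt ht.ne').const_mul 2) (by positivity)).congr_deriv ?_
  have hx := sq_sqrt ht.le
  field_simp
  linear_combination 8 * h'' * hx

theorem hasDerivAt_deriv_sqrt_of_ermakov {h h' : ℝ → ℝ} {h'' t w k : ℝ}
    (hh : HasDerivAt h (h' t) t) (hh' : HasDerivAt h' h'' t) (ht : 0 < h t)
    (hinv : 2 * h t * h'' - h' t ^ 2 + 4 * w ^ 2 * h t ^ 2 = 4 * k) :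
    HasDerivAt (fun s => h' s / (2 * √(h s))) (-w ^ 2 * √(h t) + k / √(h t) ^ 3) t := by
  refine (hasDerivAt_deriv_sqrt hh hh' ht).congr_deriv ?_
  have hsqrt : 0 < √(h t) := sqrt_pos.mpr ht
  have hx := sq_sqrt ht.le
  field_simp
  linear_combination hinv + 4 * w ^ 2 * (√(h t) ^ 2 + h t) * hx

theorem pinney_solution_from_oscillator_solutions_general
    (I : Set ℝ) (ω : ℝ → ℝ) (k : ℝ)
    (y vy z vz : ℝ → ℝ)
    (hy : ∀ t ∈ I, HasDerivAt y (vy t) t)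
    (hvy : ∀ t ∈ I, HasDerivAt vy (-(ω t)^2 * y t) t)
    (hz : ∀ t ∈ I, HasDerivAt z (vz t) t)
    (hvz : ∀ t ∈ I, HasDerivAt vz (-(ω t)^2 * z t) t)
    (W : ℝ) (hWne : W ≠ 0)
    (hW : ∀ t ∈ I, y t * vz t - z t * vy t = W)
    (I1 I2 : ℝ) (hdisc : 4 * I1 * I2 - k * W^2 ≥ 0)
    (h : ℝ → ℝ)
    (hdef : ∀ t, h t = (2 / W^2) *
      (I2 * (y t)^2 + I1 * (z t)^2 + Real.sqrt (4 * I1 * I2 - k * W^2) * y t * z t))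
    (hpos : ∀ t ∈ I, 0 < h t) :
    ∃ v : ℝ → ℝ,
      (∀ t ∈ I, HasDerivAt (fun s => Real.sqrt (h s)) (v t) t) ∧
      (∀ t ∈ I, HasDerivAt v
        (-(ω t)^2 * Real.sqrt (h t) + k / (Real.sqrt (h t))^3) t) := by
  set c := √(4 * I1 * I2 - k * W ^ 2)
  have hc : c ^ 2 = 4 * I1 * I2 - k * W ^ 2 := sq_sqrt hdisc
  have hQ : h = fun s => 2 / W ^ 2 * binaryQuadForm I2 I1 c (y s) (z s) := funext hdef
  set h' := fun s => 2 / W ^ 2 * binaryQuadForm.polar I2 I1 c (y s) (z s) (vy s) (vz s)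
  have hh : ∀ t ∈ I, HasDerivAt h (h' t) t := fun t ht =>
    hQ ▸ (hasDerivAt_binaryQuadForm I2 I1 c (hy t ht) (hz t ht)).const_mul _
  refine ⟨fun s => h' s / (2 * √(h s)), fun t ht => (hh t ht).sqrt (hpos t ht).ne',
    fun t ht => ?_⟩
  have hh' := (hasDerivAt_binaryQuadForm_polar I2 I1 c (hy t ht) (hz t ht)
    (hvy t ht) (hvz t ht)).const_mul (2 / W ^ 2)
  rw [binaryQuadForm.polar_mul_self] at hh'
  refine hasDerivAt_deriv_sqrt_of_ermakov (hh t ht) hh' (hpos t ht) ?_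
  have hLagrange := binaryQuadForm.four_mul_mul_sub_polar_sq I2 I1 c (y t) (z t) (vy t) (vz t)
  rw [hW t ht, hc] at hLagrange
  simp only [hQ, h']
  field_simp
  linear_combination 4 * hLagrange

/-- Pinney's theorem: if `y, z` solve `u'' = −ω(t)²·u` with
constant nonzero Wronskian `W`, and `I1, I2` are constants with
`4·I1·I2 − k·W² ≥ 0`, then
`x = √((2/W²)·(I2·y² + I1·z² + √(4·I1·I2 − k·W²)·y·z))` (assumed positive
under the square root) solves the Milne–Pinney equation
`x'' = −ω(t)²·x + k/x³`. -/
theorem pinney_solution_from_oscillator_solutions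
    (I : Set ℝ) (hI : Convex ℝ I) (ω : ℝ → ℝ) (k : ℝ)
    (y vy z vz : ℝ → ℝ)
    (hy : ∀ t ∈ I, HasDerivAt y (vy t) t)
    (hvy : ∀ t ∈ I, HasDerivAt vy (-(ω t)^2 * y t) t)
    (hz : ∀ t ∈ I, HasDerivAt z (vz t) t)
    (hvz : ∀ t ∈ I, HasDerivAt vz (-(ω t)^2 * z t) t)
    (W : ℝ) (hWne : W ≠ 0)
    (hW : ∀ t ∈ I, y t * vz t - z t * vy t = W)
    (I1 I2 : ℝ) (hdisc : 4 * I1 * I2 - k * W^2 ≥ 0)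
    (h : ℝ → ℝ)
    (hdef : ∀ t, h t = (2 / W^2) *
      (I2 * (y t)^2 + I1 * (z t)^2 + Real.sqrt (4 * I1 * I2 - k * W^2) * y t * z t))
    (hpos : ∀ t ∈ I, 0 < h t) :
    ∃ v : ℝ → ℝ,
      (∀ t ∈ I, HasDerivAt (fun s => Real.sqrt (h s)) (v t) t) ∧
      (∀ t ∈ I, HasDerivAt v
        (-(ω t)^2 * Real.sqrt (h t) + k / (Real.sqrt (h t))^3) t) :=
  pinney_solution_from_oscillator_solutions_general I ω k y vy z vz hy hvy hz hvz W hWne hW I1 I2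
    hdisc h hdef hpos
end

section
/- Let u0, u1, ω0, x0, p0 ∈ ℝ with ω0 ≠ 0, let V(t) = u1·t + u0, and let I ⊆ ℝ be an interval containing 0 on which V(t) ≠ 0. Define τ(t) = ∫_0^t V(s)^{−2} ds and x(t) = V(t)·( cos(ω0·τ(t))·x0/V(0) + (1/ω0)·sin(ω0·τ(t))·(−u1·x0 + V(0)·p0) ). Then x is twice differentiable on I and satisfies x''(t) = −(ω0²/V(t)⁴)·x(t) for all t ∈ I, with x(0) = x0 and x'(0) = p0. -/
/-!
Write `x(t) = V(t) · y(τ(t))` with `y(s) = cos(ω0 s)·A + (1/ω0) sin(ω0 s)·B`, a solution of the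
autonomous oscillator `y'' = -ω0² y`. Since `V'' = 0` and `τ' = V⁻²`, the chain rule gives
`x' = u1·y(τ) + y'(τ)/V` and then `x'' = y''(τ)/V³ = -ω0² x/V⁴`: the terms `± u1 y'(τ)/V²` cancel.
The constants `A = x0/V(0)`, `B = -u1 x0 + V(0) p0` are chosen so that `x(0) = x0`, `x'(0) = p0`.
-/

open Real Set

theorem hasDerivAt_integral_inv_of_ne_zero {g : ℝ → ℝ} (hg : Continuous g) {a t : ℝ}
    (hne : ∀ s ∈ uIcc a t, g s ≠ 0) :
    HasDerivAt (fun u => ∫ s in a..u, (g s)⁻¹) (g t)⁻¹ t :=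
  intervalIntegral.integral_hasDerivAt_right (hg.continuousOn.inv₀ hne).intervalIntegrable
    hg.measurable.inv.stronglyMeasurable.stronglyMeasurableAtFilter
    (hg.continuousAt.inv₀ (hne t right_mem_uIcc))

section Reparametrization

variable {y y' V τ : ℝ → ℝ} {u1 t : ℝ}

theorem hasDerivAt_mul_comp_of_hasDerivAt_inv_sq (hy : HasDerivAt y (y' (τ t)) (τ t))
    (hV : HasDerivAt V u1 t) (hτ : HasDerivAt τ (V t ^ 2)⁻¹ t) (hVt : V t ≠ 0) :
    HasDerivAt (fun t => V t * y (τ t)) (u1 * y (τ t) + y' (τ t) / V t) t := by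
  refine (hV.mul (hy.comp t hτ)).congr_deriv ?_
  simp only [Function.comp_apply]
  field_simp

theorem hasDerivAt_velocity_of_hasDerivAt_inv_sq {c : ℝ}
    (hy : HasDerivAt y (y' (τ t)) (τ t)) (hy' : HasDerivAt y' (c * y (τ t)) (τ t))
    (hV : HasDerivAt V u1 t) (hτ : HasDerivAt τ (V t ^ 2)⁻¹ t) (hVt : V t ≠ 0) :
    HasDerivAt (fun t => u1 * y (τ t) + y' (τ t) / V t) (c / V t ^ 4 * (V t * y (τ t))) t := by
  refine (((hy.comp t hτ).const_mul u1).add ((hy'.comp t hτ).div hV hVt)).congr_deriv ?_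
  simp only [Function.comp_apply]
  field_simp
  ring

end Reparametrization

section HarmonicOscillator

variable (ω A B : ℝ)

noncomputable def harmonicSolution (s : ℝ) : ℝ := cos (ω * s) * A + 1 / ω * sin (ω * s) * B

noncomputable def harmonicVelocity (s : ℝ) : ℝ := B * cos (ω * s) - ω * A * sin (ω * s)

variable {ω} (s : ℝ)

theorem hasDerivAt_harmonicSolution (hω : ω ≠ 0) :
    HasDerivAt (harmonicSolution ω A B) (harmonicVelocity ω A B s) s := by
  have hθ := (hasDerivAt_id' s).const_mul ω
  refine ((hθ.cos.mul_const A).add ((hθ.sin.const_mul (1 / ω)).mul_const B)).congr_deriv ?_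
  simp only [harmonicVelocity]
  field_simp
  ring

theorem hasDerivAt_harmonicVelocity (hω : ω ≠ 0) :
    HasDerivAt (harmonicVelocity ω A B) (-ω ^ 2 * harmonicSolution ω A B s) s := by
  have hθ := (hasDerivAt_id' s).const_mul ω
  refine ((hθ.cos.const_mul B).sub (hθ.sin.const_mul (ω * A))).congr_deriv ?_
  simp only [harmonicSolution]
  field_simp
  ring

end HarmonicOscillator

/-- Explicit general solution of the oscillator
`x'' = −ω0²·x/V(t)⁴` with `V(t) = u1·t + u0`: with
`τ(t) = ∫_0^t V(s)⁻² ds`, the function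
`x(t) = V(t)·(cos(ω0·τ(t))·x0/V(0) + (1/ω0)·sin(ω0·τ(t))·(−u1·x0 + V(0)·p0))`
is twice differentiable, solves the equation, and has `x(0) = x0`,
`x'(0) = p0`. -/
theorem explicit_solution_time_dependent_oscillator
    (u0 u1 ω0 x0 p0 : ℝ) (hω0 : ω0 ≠ 0)
    (I : Set ℝ) (hI : Convex ℝ I) (h0 : (0 : ℝ) ∈ I)
    (V : ℝ → ℝ) (hVdef : ∀ t, V t = u1 * t + u0)
    (hVne : ∀ t ∈ I, V t ≠ 0)
    (τ : ℝ → ℝ) (hτ : ∀ t, τ t = ∫ s in (0 : ℝ)..t, ((V s)^2)⁻¹)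
    (x : ℝ → ℝ)
    (hxdef : ∀ t, x t = V t *
      (Real.cos (ω0 * τ t) * x0 / V 0
        + (1 / ω0) * Real.sin (ω0 * τ t) * (-(u1 * x0) + V 0 * p0))) :
    ∃ v : ℝ → ℝ,
      (∀ t ∈ I, HasDerivAt x (v t) t) ∧
      (∀ t ∈ I, HasDerivAt v (-(ω0^2 / (V t)^4) * x t) t) ∧
      x 0 = x0 ∧ v 0 = p0 := by
  have hV : ∀ t, HasDerivAt V u1 t := fun t => by
    rw [funext hVdef]
    simpa using ((hasDerivAt_id t).const_mul u1).add_const u0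
  have hVc : Continuous V := continuous_iff_continuousAt.2 fun t => (hV t).continuousAt
  have hτ' : ∀ t ∈ I, HasDerivAt τ (V t ^ 2)⁻¹ t := fun t ht => by
    rw [funext hτ]
    exact hasDerivAt_integral_inv_of_ne_zero (hVc.pow 2) fun s hs =>
      pow_ne_zero 2 (hVne s (hI.ordConnected.uIcc_subset h0 ht hs))
  set A := x0 / V 0
  set B := -(u1 * x0) + V 0 * p0
  have hx : x = fun t => V t * harmonicSolution ω0 A B (τ t) := by
    ext t
    rw [hxdef, harmonicSolution, mul_div_assoc]
  have hτ0 : τ 0 = 0 := by simp [hτ]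
  have hV0 := hVne 0 h0
  refine ⟨fun t => u1 * harmonicSolution ω0 A B (τ t) + harmonicVelocity ω0 A B (τ t) / V t,
    fun t ht => ?_, fun t ht => ?_, ?_, ?_⟩
  · exact hx ▸ hasDerivAt_mul_comp_of_hasDerivAt_inv_sq
      (hasDerivAt_harmonicSolution A B _ hω0) (hV t) (hτ' t ht) (hVne t ht)
  · rw [hx, ← neg_div]
    exact hasDerivAt_velocity_of_hasDerivAt_inv_sq (hasDerivAt_harmonicSolution A B _ hω0)
      (hasDerivAt_harmonicVelocity A B _ hω0) (hV t) (hτ' t ht) (hVne t ht)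
  · simp [hx, hτ0, harmonicSolution, A, mul_div_cancel₀ _ hV0]
  · simp only [hτ0, harmonicSolution, harmonicVelocity, A, B, mul_zero, cos_zero, sin_zero]
    field_simp
    ring
end

section
/- Let u0, u1, ω0 ∈ ℝ, let V(t) = u1·t + u0, and let I ⊆ ℝ be an interval on which V(t) ≠ 0. Let x, p : I → ℝ be differentiable functions satisfying x' = p and p' = −(ω0²/V(t)⁴)·x on I. Then the functions ξ(t) = x(t)/V(t) and π(t) = −u1·x(t) + V(t)·p(t) are differentiable and satisfy ξ'(t) = π(t)/V(t)² and π'(t) = −ω0²·ξ(t)/V(t)² for all t ∈ I. -/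
/-! With `x' = p`, the correction `-V'·x` in `π = -V'·x + V·p` cancels the `V'·p` term of `(V·p)'`,
and `V'' = 0` since `V` is affine; hence `π' = V·p' = -ω0²·x/V³ = -ω0²·ξ/V²`. -/

theorem hasDerivAt_affine (a b t : ℝ) : HasDerivAt (fun s => a * s + b) a t := by
  simpa using ((hasDerivAt_id t).const_mul a).add_const b

theorem HasDerivAt.neg_const_mul_add_mul {x V P : ℝ → ℝ} {v q t : ℝ}
    (hx : HasDerivAt x (P t) t) (hV : HasDerivAt V v t) (hP : HasDerivAt P q t) :
    HasDerivAt (fun s => -(v * x s) + V s * P s) (V t * q) t :=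
  ((hx.const_mul v).neg.add (hV.mul hP)).congr_deriv (by ring)

theorem time_dependent_oscillator_reduction_general
    (u0 u1 ω0 : ℝ) (I : Set ℝ)
    (hV : ∀ t ∈ I, u1 * t + u0 ≠ 0)
    (x p : ℝ → ℝ)
    (hx : ∀ t ∈ I, HasDerivAt x (p t) t)
    (hp : ∀ t ∈ I, HasDerivAt p (-(ω0^2 / (u1 * t + u0)^4) * x t) t) :
    ∀ t ∈ I,
      HasDerivAt (fun s => x s / (u1 * s + u0))
        ((-(u1 * x t) + (u1 * t + u0) * p t) / (u1 * t + u0)^2) t ∧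
      HasDerivAt (fun s => -(u1 * x s) + (u1 * s + u0) * p s)
        (-(ω0^2 * (x t / (u1 * t + u0)) / (u1 * t + u0)^2)) t := by
  intro t ht
  have hVt := hV t ht
  refine ⟨((hx t ht).fun_div (hasDerivAt_affine u1 u0 t) hVt).congr_deriv (by ring), ?_⟩
  convert (hx t ht).neg_const_mul_add_mul (hasDerivAt_affine u1 u0 t) (hp t ht) using 1
  field_simp

/-- For the time-dependent frequency oscillator `x' = p`,
`p' = −ω0²·x/V(t)⁴` with `V(t) = u1·t + u0 ≠ 0`, the time-dependent linear
change of variables `ξ = x/V`, `π = −u1·x + V·p` yields the system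
`ξ' = π/V²`, `π' = −ω0²·ξ/V²`. -/
theorem time_dependent_oscillator_reduction
    (u0 u1 ω0 : ℝ) (I : Set ℝ) (hI : Convex ℝ I)
    (hV : ∀ t ∈ I, u1 * t + u0 ≠ 0)
    (x p : ℝ → ℝ)
    (hx : ∀ t ∈ I, HasDerivAt x (p t) t)
    (hp : ∀ t ∈ I, HasDerivAt p (-(ω0^2 / (u1 * t + u0)^4) * x t) t) :
    ∀ t ∈ I,
      HasDerivAt (fun s => x s / (u1 * s + u0))
        ((-(u1 * x t) + (u1 * t + u0) * p t) / (u1 * t + u0)^2) t ∧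
      HasDerivAt (fun s => -(u1 * x s) + (u1 * s + u0) * p s)
        (-(ω0^2 * (x t / (u1 * t + u0)) / (u1 * t + u0)^2)) t :=
  time_dependent_oscillator_reduction_general u0 u1 ω0 I hV x p hx hp
end
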